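/- Let A be a complex topological algebra which is a Q-algebra (its set of quasi-invertible elements is open). Then every uniform seminorm p on A (submultiplicative seminorm with p(x²) = p(x)²) is continuous. -/

import Mathlib

/-!
Extend `p` to the seminorm `‖λ‖ + p a` on the unitization of `A`. The square property gives
`p (x ^ 2 ^ n) = p x ^ 2 ^ n`, so Gelfand's formula, applied in the completion, shows that `p x` is
at most the spectral radius of `x`. If `c⁻¹ • x` is quasi-invertible whenever `1 < ‖c‖`, the
spectrum of `x` lies in the closed unit disc, hence `p x ≤ 1`. In a Q-algebra the quasi-invertible
elements contain a balanced neighbourhood of `0`, so `p ≤ 1` there, and a seminorm bounded on a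
neighbourhood of `0` is continuous.
-/

/-- `x` is quasi-invertible: there is `y` with `x ∘ y = y ∘ x = 0`
where `x ∘ y = x + y - x*y`. -/
def IsQuasiInv {A : Type*} [NonUnitalRing A] (x : A) : Prop :=
  ∃ y, x + y - x * y = 0 ∧ y + x - y * x = 0

open UniformSpace Filter Topology
open scoped ENNReal

theorem IsQuasiInv.map {F A B : Type*} [NonUnitalRing A] [NonUnitalRing B] [FunLike F A B]
    [NonUnitalRingHomClass F A B] (f : F) {x : A} (hx : IsQuasiInv x) : IsQuasiInv (f x) := by
  obtain ⟨y, hxy, hyx⟩ := hx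
  refine ⟨f y, ?_, ?_⟩
  · rw [← map_mul, ← map_add, ← map_sub, hxy, map_zero]
  · rw [← map_mul, ← map_add, ← map_sub, hyx, map_zero]

theorem IsQuasiInv.isUnit_one_sub {R : Type*} [Ring R] {x : R} (hx : IsQuasiInv x) :
    IsUnit (1 - x) := by
  obtain ⟨y, hxy, hyx⟩ := hx
  refine ⟨⟨1 - x, 1 - y, ?_, ?_⟩, rfl⟩
  · calc (1 - x) * (1 - y) = 1 - (x + y - x * y) := by noncomm_ring
      _ = 1 := by rw [hxy, sub_zero]
  · calc (1 - y) * (1 - x) = 1 - (y + x - y * x) := by noncomm_ring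
      _ = 1 := by rw [hyx, sub_zero]

noncomputable instance UniformSpace.Completion.instNormedAlgebraOfSeminormedRing
    {𝕜 E : Type*} [NormedField 𝕜] [SeminormedRing E] [NormedAlgebra 𝕜 E] :
    NormedAlgebra 𝕜 (Completion E) where
  norm_smul_le := norm_smul_le

theorem spectralRadius_eq_nnnorm_of_nnnorm_pow_two_pow {E : Type*} [NormedRing E]
    [NormedAlgebra ℂ E] [CompleteSpace E] {a : E} (ha : ∀ n : ℕ, ‖a ^ 2 ^ n‖₊ = ‖a‖₊ ^ 2 ^ n) :
    spectralRadius ℂ a = ‖a‖₊ := by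
  refine tendsto_nhds_unique (f := fun _ : ℕ => (‖a‖₊ : ℝ≥0∞)) (l := atTop) ?_ tendsto_const_nhds
  convert! (spectrum.pow_nnnorm_pow_one_div_tendsto_nhds_spectralRadius a).comp
    (tendsto_pow_atTop_atTop_of_one_lt one_lt_two) using 1
  funext n
  rw [Function.comp_apply, ha n, ENNReal.coe_pow, ← ENNReal.rpow_natCast, ← ENNReal.rpow_mul]
  simp

theorem nnnorm_le_spectralRadius_of_nnnorm_pow_two_pow {E : Type*} [SeminormedRing E]
    [NormedAlgebra ℂ E] {a : E} (ha : ∀ n : ℕ, ‖a ^ 2 ^ n‖₊ = ‖a‖₊ ^ 2 ^ n) :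
    (‖a‖₊ : ℝ≥0∞) ≤ spectralRadius ℂ a := by
  let ι : E →ₐ[ℂ] Completion E := { Completion.coeRingHom with commutes' := fun _ => rfl }
  have hι (n : ℕ) : ‖ι a ^ 2 ^ n‖₊ = ‖ι a‖₊ ^ 2 ^ n := by
    rw [← map_pow]
    simpa [ι, Completion.coeRingHom] using ha n
  calc (‖a‖₊ : ℝ≥0∞) = ‖ι a‖₊ := by simp [ι, Completion.coeRingHom]
    _ = spectralRadius ℂ (ι a) := (spectralRadius_eq_nnnorm_of_nnnorm_pow_two_pow hι).symm
    _ ≤ spectralRadius ℂ a := iSup_le_iSup_of_subset (AlgHom.spectrum_apply_subset ι a)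

theorem Unitization.spectralRadius_inr_le_one {𝕜 A : Type*} [NormedField 𝕜] [NonUnitalRing A]
    [Module 𝕜 A] [IsScalarTower 𝕜 A A] [SMulCommClass 𝕜 A A] {x : A}
    (hx : ∀ c : 𝕜, 1 < ‖c‖ → IsQuasiInv (c⁻¹ • x)) :
    spectralRadius 𝕜 (x : Unitization 𝕜 A) ≤ 1 := by
  refine iSup₂_le fun c hc => ?_
  by_contra! hc_gt
  have hc1 : 1 < ‖c‖ := by exact_mod_cast hc_gt
  have hc0 : c ≠ 0 := norm_pos_iff.mp (one_pos.trans hc1)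
  have hunit : IsUnit (1 - ((c⁻¹ • x : A) : Unitization 𝕜 A)) :=
    ((hx c hc1).map (Unitization.inrNonUnitalAlgHom 𝕜 A)).isUnit_one_sub
  refine spectrum.mem_iff.mp hc ?_
  have hfactor : algebraMap 𝕜 (Unitization 𝕜 A) c - x
      = algebraMap 𝕜 _ c * (1 - ((c⁻¹ • x : A) : Unitization 𝕜 A)) := by
    rw [mul_sub, mul_one, ← Algebra.smul_def, Unitization.inr_smul, smul_smul,
      mul_inv_cancel₀ hc0, one_smul]
  rw [hfactor]
  exact (hc0.isUnit.map _).mul hunit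

theorem apply_iterate_mul_self {M N : Type*} [Mul M] [Monoid N] {f : M → N}
    (hf : ∀ x, f (x * x) = f x * f x) (x : M) (n : ℕ) :
    f ((fun w => w * w)^[n] x) = f x ^ 2 ^ n := by
  induction n with
  | zero => simp
  | succ n ih => rw [Function.iterate_succ_apply', hf, ih, pow_succ, pow_mul, sq]

theorem Unitization.inr_iterate_mul_self {R A : Type*} [CommSemiring R] [NonUnitalSemiring A]
    [Module R A] [IsScalarTower R A A] [SMulCommClass R A A] (x : A) (n : ℕ) :
    (((fun w => w * w)^[n] x : A) : Unitization R A) = (x : Unitization R A) ^ 2 ^ n := by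
  induction n with
  | zero => simp
  | succ n ih => rw [Function.iterate_succ_apply', Unitization.inr_mul, ih, pow_succ, pow_mul, sq]

namespace Seminorm

section Unitization

variable {𝕜 A : Type*} [NormedField 𝕜] [NonUnitalRing A] [Module 𝕜 A] [IsScalarTower 𝕜 A A]
  [SMulCommClass 𝕜 A A] (p : Seminorm 𝕜 A) (hp : ∀ x y, p (x * y) ≤ p x * p y)

def unitizationRingSeminorm : RingSeminorm (Unitization 𝕜 A) where
  toFun w := ‖w.fst‖ + p w.snd
  map_zero' := by simp
  add_le' v w := by
    simp only [Unitization.fst_add, Unitization.snd_add]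
    linarith [norm_add_le v.fst w.fst, map_add_le_add p v.snd w.snd]
  neg' w := by simp
  mul_le' v w := by
    simp only [Unitization.fst_mul, Unitization.snd_mul]
    have hsnd : p (v.fst • w.snd + w.fst • v.snd + v.snd * w.snd)
        ≤ ‖v.fst‖ * p w.snd + ‖w.fst‖ * p v.snd + p v.snd * p w.snd := by
      grw [map_add_le_add, map_add_le_add, map_smul_eq_mul, map_smul_eq_mul, hp]
    calc ‖v.fst * w.fst‖ + p (v.fst • w.snd + w.fst • v.snd + v.snd * w.snd)
        ≤ ‖v.fst‖ * ‖w.fst‖ + (‖v.fst‖ * p w.snd + ‖w.fst‖ * p v.snd + p v.snd * p w.snd) :=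
          add_le_add (norm_mul_le _ _) hsnd
      _ = (‖v.fst‖ + p v.snd) * (‖w.fst‖ + p w.snd) := by ring

theorem unitizationRingSeminorm_apply (w : Unitization 𝕜 A) :
    p.unitizationRingSeminorm hp w = ‖w.fst‖ + p w.snd :=
  rfl

theorem unitizationRingSeminorm_inr (x : A) : p.unitizationRingSeminorm hp x = p x := by
  simp [unitizationRingSeminorm_apply]

end Unitization

theorem le_one_of_isQuasiInv_smul {A : Type*} [NonUnitalRing A] [Module ℂ A]
    [IsScalarTower ℂ A A] [SMulCommClass ℂ A A] (p : Seminorm ℂ A)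
    (hmul : ∀ x y, p (x * y) ≤ p x * p y) (hsq : ∀ x, p (x * x) = p x * p x)
    {x : A} (hx : ∀ c : ℂ, 1 < ‖c‖ → IsQuasiInv (c⁻¹ • x)) : p x ≤ 1 := by
  let q := p.unitizationRingSeminorm hmul
  let _ : SeminormedRing (Unitization ℂ A) := q.toSeminormedRing
  let _ : NormedAlgebra ℂ (Unitization ℂ A) :=
    { norm_smul_le c w := by
        change q (c • w) ≤ ‖c‖ * q w
        simp [q, unitizationRingSeminorm_apply, mul_add, map_smul_eq_mul] }
  have hpow (n : ℕ) : ‖(x : Unitization ℂ A) ^ 2 ^ n‖₊ = ‖(x : Unitization ℂ A)‖₊ ^ 2 ^ n := by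
    ext
    change q _ = q _ ^ _
    rw [← Unitization.inr_iterate_mul_self, unitizationRingSeminorm_inr,
      unitizationRingSeminorm_inr, apply_iterate_mul_self hsq]
  rw [← p.unitizationRingSeminorm_inr hmul x]
  exact_mod_cast (nnnorm_le_spectralRadius_of_nnnorm_pow_two_pow hpow).trans
    (Unitization.spectralRadius_inr_le_one hx)

end Seminorm

theorem uniform_seminorm_continuous_of_qAlgebra_general {A : Type*} [NonUnitalRing A]
    [Module ℂ A] [SMulCommClass ℂ A A] [IsScalarTower ℂ A A]
    [TopologicalSpace A] [IsTopologicalAddGroup A] [ContinuousSMul ℂ A]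
    (hQ : IsOpen {x : A | IsQuasiInv x})
    (p : A → ℝ)
    (hadd : ∀ x y, p (x + y) ≤ p x + p y)
    (hsmul : ∀ (c : ℂ) (x : A), p (c • x) = ‖c‖ * p x)
    (hmul : ∀ x y, p (x * y) ≤ p x * p y)
    (hsq : ∀ x, p (x * x) = p x * p x) :
    Continuous p := by
  let q : Seminorm ℂ A := Seminorm.of p hadd hsmul
  let V := balancedCore ℂ {x : A | IsQuasiInv x}
  have hV : V ∈ 𝓝 0 := balancedCore_mem_nhds_zero (hQ.mem_nhds ⟨0, by simp, by simp⟩)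
  refine q.continuous' (r := 1) (mem_of_superset hV fun x hxV => ?_)
  refine q.mem_closedBall_zero.mpr (q.le_one_of_isQuasiInv_smul hmul hsq fun c hc => ?_)
  have hc_inv : ‖c⁻¹‖ ≤ 1 := by
    rw [norm_inv]
    exact inv_le_one_of_one_le₀ hc.le
  exact balancedCore_subset {x : A | IsQuasiInv x}
    ((balancedCore_balanced _).smul_mem hc_inv hxV)

/-- Let `A` be a complex topological algebra which is a Q-algebra (its set of
quasi-invertible elements is open). Then every uniform seminorm on `A`
(submultiplicative with the square property) is continuous. -/
theorem uniform_seminorm_continuous_of_qAlgebra {A : Type*} [NonUnitalRing A]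
    [Module ℂ A] [SMulCommClass ℂ A A] [IsScalarTower ℂ A A]
    [TopologicalSpace A] [IsTopologicalAddGroup A] [ContinuousSMul ℂ A]
    (hmull : ∀ a : A, Continuous fun x => a * x)
    (hmulr : ∀ a : A, Continuous fun x => x * a)
    (hQ : IsOpen {x : A | IsQuasiInv x})
    (p : A → ℝ)
    (hadd : ∀ x y, p (x + y) ≤ p x + p y)
    (hsmul : ∀ (c : ℂ) (x : A), p (c • x) = ‖c‖ * p x)
    (hmul : ∀ x y, p (x * y) ≤ p x * p y)
    (hsq : ∀ x, p (x * x) = p x * p x) :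
    Continuous p :=
  uniform_seminorm_continuous_of_qAlgebra_general hQ p hadd hsmul hmul hsq
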